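/- Every divergence-free vector polynomial v ∈ [ℙ_{k−1}(ℝ³)]³ can be written as v = curl(x ∧ p) for some p ∈ [ℙ_{k−1}(ℝ³)]³. -/

import Mathlib

open MvPolynomial Finsupp

noncomputable def opc (c : ℕ) (q : MvPolynomial (Fin 3) ℝ) : MvPolynomial (Fin 3) ℝ :=
  ∑ s ∈ q.support, monomial s (coeff s q / (s.sum (fun _ e => e) + c))

lemma coeff_opc (c : ℕ) (q : MvPolynomial (Fin 3) ℝ) (t : Fin 3 →₀ ℕ) :
    coeff t (opc c q) = coeff t q / (t.sum (fun _ e => e) + c) := by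
  unfold opc
  rw [coeff_sum]
  simp only [coeff_monomial]
  rw [Finset.sum_congr rfl (fun s _ => ?_), Finset.sum_ite_eq' q.support t
    (fun _ => coeff t q / ((t.sum fun _ e => e) + c))]
  · split <;> simp_all
  · split <;> simp_all

lemma opc_add (c : ℕ) (q r : MvPolynomial (Fin 3) ℝ) :
    opc c (q + r) = opc c q + opc c r := by
  ext t
  simp [coeff_opc, add_div]

lemma opc_zero (c : ℕ) : opc c 0 = 0 := by
  ext t; simp [coeff_opc]

lemma opc_monomial (c : ℕ) (s : Fin 3 →₀ ℕ) (a : ℝ) :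
    opc c (monomial s a) = monomial s (a / (s.sum (fun _ e => e) + c)) := by
  ext t
  rw [coeff_opc, coeff_monomial, coeff_monomial]
  split <;> simp_all

lemma sum_eq_sum_univ (s : Fin 3 →₀ ℕ) : (s.sum fun _ e => e) = ∑ j, s j :=
  Finsupp.sum_fintype _ _ (fun _ => rfl)

lemma degree_sub_single (s : Fin 3 →₀ ℕ) (i : Fin 3) (h : s i ≠ 0) :
    ((s - Finsupp.single i 1).sum fun _ e => e) + 1 = s.sum fun _ e => e := by
  rw [sum_eq_sum_univ, sum_eq_sum_univ]
  simp only [Finsupp.tsub_apply, Fin.sum_univ_three, Finsupp.single_apply]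
  fin_cases i <;> simp_all <;> omega

lemma pderiv_opc (c : ℕ) (i : Fin 3) (q : MvPolynomial (Fin 3) ℝ) :
    pderiv i (opc c q) = opc (c + 1) (pderiv i q) := by
  induction q using MvPolynomial.induction_on' with
  | monomial s a =>
    rw [opc_monomial, pderiv_monomial, pderiv_monomial, opc_monomial]
    by_cases h : s i = 0
    · simp [h]
    · congr 1
      have hd := degree_sub_single s i h
      have hD : (((s - Finsupp.single i 1).sum fun _ e => e : ℕ) : ℝ) + ((c:ℝ)+1)
          = ((s.sum fun _ e => e : ℕ) : ℝ) + c := by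
        rw [← hd]; push_cast; ring
      rw [Nat.cast_add_one, hD]
      ring
  | add p q hp hq =>
    simp only [opc_add, map_add, hp, hq]

lemma X_mul_pderiv_monomial (i : Fin 3) (s : Fin 3 →₀ ℕ) (a : ℝ) :
    X i * pderiv i (monomial s a) = monomial s (a * s i) := by
  rw [pderiv_monomial, X, monomial_mul, one_mul]
  by_cases h : s i = 0
  · simp [h]
  · have hs : Finsupp.single i 1 + (s - Finsupp.single i 1) = s := by
      rw [add_comm]
      exact tsub_add_cancel_of_le (Finsupp.single_le_iff.mpr (Nat.one_le_iff_ne_zero.mpr h))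
    rw [hs]

lemma key (q : MvPolynomial (Fin 3) ℝ) :
    2 * opc 2 q + ∑ i : Fin 3, X i * pderiv i (opc 2 q) = q := by
  induction q using MvPolynomial.induction_on' with
  | monomial s a =>
    rw [opc_monomial]
    simp only [X_mul_pderiv_monomial]
    rw [Fin.sum_univ_three]
    have h2 : (2 : MvPolynomial (Fin 3) ℝ) = C 2 := (map_ofNat C 2).symm
    rw [h2, C_mul_monomial, ← map_add, ← map_add, ← map_add]
    congr 1
    have hd : ((s.sum fun _ e => e : ℕ) : ℝ) = (s 0 : ℝ) + s 1 + s 2 := by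
      rw [sum_eq_sum_univ]; push_cast [Fin.sum_univ_three]; ring
    have hpos : ((s.sum fun _ e => e : ℕ) : ℝ) + 2 ≠ 0 := by positivity
    rw [hd] at hpos
    rw [hd]
    field_simp
    ring
  | add p q hp hq =>
    simp only [opc_add, map_add, mul_add, Finset.sum_add_distrib] at *
    calc _ = (2 * opc 2 p + ∑ i : Fin 3, X i * pderiv i (opc 2 p))
        + (2 * opc 2 q + ∑ i : Fin 3, X i * pderiv i (opc 2 q)) := by ring
    _ = p + q := by rw [hp, hq]

lemma totalDegree_opc_le (c : ℕ) (q : MvPolynomial (Fin 3) ℝ) :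
    (opc c q).totalDegree ≤ q.totalDegree := by
  apply Finset.sup_mono
  intro s hs
  rw [MvPolynomial.mem_support_iff] at *
  intro h
  apply hs
  rw [coeff_opc, h, zero_div]


/-- The formal cross product `x ∧ p` of the position vector with a polynomial vector field. -/
noncomputable def crossX (p : Fin 3 → MvPolynomial (Fin 3) ℝ) : Fin 3 → MvPolynomial (Fin 3) ℝ :=
  ![X 1 * p 2 - X 2 * p 1, X 2 * p 0 - X 0 * p 2, X 0 * p 1 - X 1 * p 0]

/-- The formal curl of a polynomial vector field on `ℝ³`. -/
noncomputable def curlP (q : Fin 3 → MvPolynomial (Fin 3) ℝ) : Fin 3 → MvPolynomial (Fin 3) ℝ :=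
  ![pderiv 1 (q 2) - pderiv 2 (q 1),
    pderiv 2 (q 0) - pderiv 0 (q 2),
    pderiv 0 (q 1) - pderiv 1 (q 0)]

/-- Every divergence-free vector polynomial `v ∈ [ℙ_{k-1}(ℝ³)]³` can be written as
`v = curl(x ∧ p)` for some `p ∈ [ℙ_{k-1}(ℝ³)]³`. -/
theorem stmt_12 (k : ℕ) (v : Fin 3 → MvPolynomial (Fin 3) ℝ)
    (hdeg : ∀ i, (v i).totalDegree ≤ k - 1)
    (hdiv : (∑ i, pderiv i (v i)) = 0) :
    ∃ p : Fin 3 → MvPolynomial (Fin 3) ℝ,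
      (∀ i, (p i).totalDegree ≤ k - 1) ∧ ∀ i, curlP (crossX p) i = v i := by
  set u : Fin 3 → MvPolynomial (Fin 3) ℝ := fun i => opc 2 (v i) with hu
  refine ⟨fun i => -(u i), fun i => ?_, ?_⟩
  · rw [totalDegree_neg]
    exact le_trans (totalDegree_opc_le 2 (v i)) (hdeg i)
  · have hA : pderiv 0 (u 0) + pderiv 1 (u 1) + pderiv 2 (u 2) = 0 := by
      simp only [hu, pderiv_opc]
      rw [← opc_add, ← opc_add]
      rw [Fin.sum_univ_three] at hdiv
      rw [hdiv, opc_zero]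
    have hB : ∀ j, 2 * u j + (X 0 * pderiv 0 (u j) + X 1 * pderiv 1 (u j)
        + X 2 * pderiv 2 (u j)) = v j := by
      intro j
      have := key (v j)
      rw [Fin.sum_univ_three] at this
      simpa [hu, add_assoc] using this
    intro i
    fin_cases i <;>
      simp [curlP, crossX, pderiv_mul]
    · linear_combination hB 0 - X 0 * hA
    · linear_combination hB 1 - X 1 * hA
    · linear_combination hB 2 - X 2 * hA
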